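/- Let P and N be smooth matrix-valued maps on ℝⁿ such that P(x) is skew-symmetric and N(x)P(x) is skew-symmetric for every x, and suppose the Magri–Morosi concomitant vanishes identically: C^{kj}_m = 0 for all indices k, j, m and all points. Then for every smooth function f : ℝⁿ → ℝ and every point: Σ_{l,k} P^{lk} ∂_k ( Σ_j N^j_l ∂_j f ) = −(1/2) Σ_{l,j} P^{lj} (∂_l Tr N)(∂_j f). -/

import Mathlib

open Matrix BigOperators

/-- Partial derivative in the `l`-th coordinate direction. -/
noncomputable def pd {n : ℕ} (l : Fin n) (f : (Fin n → ℝ) → ℝ) (x : Fin n → ℝ) : ℝ :=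
  fderiv ℝ f x (Pi.single l 1)

/-- The Magri–Morosi concomitant `C(P,N)^{kj}_m` in coordinates. -/
noncomputable def MagriMorosi {n : ℕ}
    (P N : (Fin n → ℝ) → Matrix (Fin n) (Fin n) ℝ)
    (k j m : Fin n) (x : Fin n → ℝ) : ℝ :=
  ∑ l, (P x l j * pd l (fun y => N y k m) x
      + P x k l * pd l (fun y => N y j m) x
      - N x l m * pd l (fun y => P y k j) x
      + N x j l * pd m (fun y => P y k l) x
      - P x l j * pd m (fun y => N y k l) x)

section helpers

variable {n : ℕ}

lemma pd_sum {ι : Type*} (s : Finset ι) (g : ι → (Fin n → ℝ) → ℝ) (l : Fin n)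
    (x : Fin n → ℝ) (hg : ∀ i ∈ s, DifferentiableAt ℝ (g i) x) :
    pd l (fun y => ∑ i ∈ s, g i y) x = ∑ i ∈ s, pd l (g i) x := by
  unfold pd
  rw [fderiv_fun_sum hg]
  simp

lemma pd_mul (g h : (Fin n → ℝ) → ℝ) (l : Fin n) (x : Fin n → ℝ)
    (hg : DifferentiableAt ℝ g x) (hh : DifferentiableAt ℝ h x) :
    pd l (fun y => g y * h y) x = pd l g x * h x + g x * pd l h x := by
  unfold pd
  rw [fderiv_fun_mul hg hh]
  simp
  ring

lemma pd_add (g h : (Fin n → ℝ) → ℝ) (l : Fin n) (x : Fin n → ℝ)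
    (hg : DifferentiableAt ℝ g x) (hh : DifferentiableAt ℝ h x) :
    pd l (fun y => g y + h y) x = pd l g x + pd l h x := by
  unfold pd
  rw [fderiv_fun_add hg hh]
  simp

lemma pd_neg (g : (Fin n → ℝ) → ℝ) (l : Fin n) (x : Fin n → ℝ) :
    pd l (fun y => -(g y)) x = -pd l g x := by
  unfold pd
  rw [fderiv_fun_neg]
  simp

lemma pd_zero (l : Fin n) (x : Fin n → ℝ) : pd l (fun _ => (0:ℝ)) x = 0 := by
  unfold pd
  rw [fderiv_fun_const]
  simp

lemma contDiff_pd (f : (Fin n → ℝ) → ℝ) (hf : ContDiff ℝ (⊤ : ℕ∞) f) (l : Fin n) :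
    ContDiff ℝ (⊤ : ℕ∞) (pd l f) :=
  (hf.fderiv_right (by simp)).clm_apply contDiff_const

lemma pd_swap (f : (Fin n → ℝ) → ℝ) (hf : ContDiff ℝ (⊤ : ℕ∞) f) (k j : Fin n) (x : Fin n → ℝ) :
    pd k (pd j f) x = pd j (pd k f) x := by
  have hsymm : IsSymmSndFDerivAt ℝ f x :=
    hf.contDiffAt.isSymmSndFDerivAt (by rw [minSmoothness_of_isRCLikeNormedField]; exact WithTop.coe_le_coe.mpr (le_top : (2 : ℕ∞) ≤ ⊤))
  have hd : DifferentiableAt ℝ (fderiv ℝ f) x :=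
    ((hf.fderiv_right (m := (⊤ : ℕ∞)) (by simp)).differentiable (by simp)).differentiableAt
  have h1 : ∀ a b : Fin n, pd a (pd b f) x
      = fderiv ℝ (fderiv ℝ f) x (Pi.single a 1) (Pi.single b 1) := by
    intro a b
    unfold pd
    rw [fderiv_clm_apply hd (differentiableAt_const _)]
    simp
  rw [h1, h1, hsymm]

end helpers

theorem interior_product_dN_df
    {n : ℕ} (hn : 1 ≤ n)
    (P N : (Fin n → ℝ) → Matrix (Fin n) (Fin n) ℝ)
    (hP : ∀ i j : Fin n, ContDiff ℝ (⊤ : ℕ∞) (fun x => P x i j))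
    (hN : ∀ i j : Fin n, ContDiff ℝ (⊤ : ℕ∞) (fun x => N x i j))
    (hskewP : ∀ x, (P x)ᵀ = -(P x))
    (hskewNP : ∀ x, (N x * P x)ᵀ = -(N x * P x))
    (hC : ∀ (k j m : Fin n) (x : Fin n → ℝ), MagriMorosi P N k j m x = 0) :
    ∀ (f : (Fin n → ℝ) → ℝ), ContDiff ℝ (⊤ : ℕ∞) f →
      ∀ x : Fin n → ℝ,
      ∑ l, ∑ k, P x l k * pd k (fun y => ∑ j, N y j l * pd j f y) x
        = -(1 / 2 : ℝ) * ∑ l, ∑ j, P x l j * pd l (fun y => ∑ m, N y m m) x * pd j f x := by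
  intro f hf x
  have hPd : ∀ (i j : Fin n) (y : Fin n → ℝ), DifferentiableAt ℝ (fun z => P z i j) y :=
    fun i j y => ((hP i j).differentiable (by simp)).differentiableAt
  have hNd : ∀ (i j : Fin n) (y : Fin n → ℝ), DifferentiableAt ℝ (fun z => N z i j) y :=
    fun i j y => ((hN i j).differentiable (by simp)).differentiableAt
  have hfd : ∀ (j : Fin n) (y : Fin n → ℝ), DifferentiableAt ℝ (pd j f) y :=
    fun j y => ((contDiff_pd f hf j).differentiable (by simp)).differentiableAt
  -- entrywise skewness of P
  have hPsk : ∀ (y : Fin n → ℝ) (a b : Fin n), P y a b = -P y b a := by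
    intro y a b
    have h1 := congrFun (congrFun (hskewP y) b) a
    simpa [Matrix.transpose_apply] using h1
  have hpdPsk : ∀ (m a b : Fin n) (y : Fin n → ℝ),
      pd m (fun z => P z a b) y = -pd m (fun z => P z b a) y := by
    intro m a b y
    have h1 : (fun z => P z a b) = (fun z => -(P z b a)) := funext fun z => hPsk z a b
    rw [h1, pd_neg]
  -- skewness of N*P, entrywise
  have hNPsk : ∀ (y : Fin n → ℝ) (a b : Fin n),
      ∑ l, (N y a l * P y l b + N y b l * P y l a) = 0 := by
    intro y a b
    have h1 := congrFun (congrFun (hskewNP y) b) a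
    rw [Matrix.transpose_apply, Matrix.neg_apply, Matrix.mul_apply, Matrix.mul_apply] at h1
    rw [Finset.sum_add_distrib, h1]
    ring
  -- THE KEY IDENTITY --
  have key : ∀ j : Fin n,
      (∑ l, ∑ k, P x l k * pd k (fun y => N y j l) x)
        = -(1/2 : ℝ) * ∑ l, P x l j * pd l (fun y => ∑ m, N y m m) x := by
    intro j
    -- identity (I): traced concomitant
    have hI : ∑ k : Fin n, ∑ l,
        (P x l j * pd l (fun y => N y k k) x
          + P x k l * pd l (fun y => N y j k) x
          - N x l k * pd l (fun y => P y k j) x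
          + N x j l * pd k (fun y => P y k l) x
          - P x l j * pd k (fun y => N y k l) x) = 0 :=
      Finset.sum_eq_zero fun k _ => hC k j k x
    simp only [Finset.sum_add_distrib, Finset.sum_sub_distrib] at hI
    -- identity (II): derivative of N*P skewness, traced
    have hII0 : ∀ k : Fin n, ∑ l,
        (pd k (fun y => N y j l) x * P x l k + N x j l * pd k (fun y => P y l k) x
          + (pd k (fun y => N y k l) x * P x l j + N x k l * pd k (fun y => P y l j) x)) = 0 := by
      intro k
      have hterm : ∀ l : Fin n,
          pd k (fun y => N y j l * P y l k + N y k l * P y l j) x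
            = pd k (fun y => N y j l) x * P x l k + N x j l * pd k (fun y => P y l k) x
              + (pd k (fun y => N y k l) x * P x l j + N x k l * pd k (fun y => P y l j) x) := by
        intro l
        have e0 := pd_add (fun y => N y j l * P y l k) (fun y => N y k l * P y l j) k x
          ((hNd j l x).mul (hPd l k x)) ((hNd k l x).mul (hPd l j x))
        have e1 := pd_mul (fun y => N y j l) (fun y => P y l k) k x (hNd j l x) (hPd l k x)
        have e2 := pd_mul (fun y => N y k l) (fun y => P y l j) k x (hNd k l x) (hPd l j x)
        rw [e0, e1, e2]
      have hsum := pd_sum (n := n) Finset.univ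
          (fun l => fun y => N y j l * P y l k + N y k l * P y l j) k x
          (fun l _ => ((hNd j l x).mul (hPd l k x)).add ((hNd k l x).mul (hPd l j x)))
      have hz : (fun y => ∑ l : Fin n, (N y j l * P y l k + N y k l * P y l j))
          = fun _ => (0:ℝ) := funext fun y => hNPsk y j k
      rw [hz, pd_zero] at hsum
      calc ∑ l : Fin n,
          (pd k (fun y => N y j l) x * P x l k + N x j l * pd k (fun y => P y l k) x
            + (pd k (fun y => N y k l) x * P x l j + N x k l * pd k (fun y => P y l j) x))
          = ∑ l : Fin n, pd k (fun y => N y j l * P y l k + N y k l * P y l j) x :=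
            Finset.sum_congr rfl fun l _ => (hterm l).symm
        _ = 0 := hsum.symm
    have hII : ∑ k : Fin n, ∑ l,
        (pd k (fun y => N y j l) x * P x l k + N x j l * pd k (fun y => P y l k) x
          + (pd k (fun y => N y k l) x * P x l j + N x k l * pd k (fun y => P y l j) x)) = 0 :=
      Finset.sum_eq_zero fun k _ => hII0 k
    simp only [Finset.sum_add_distrib] at hII
    -- renaming / transposition lemmas matching hI and hII atoms to canonical quantities
    have e1 : (∑ k : Fin n, ∑ l, P x l j * pd l (fun y => N y k k) x)
        = ∑ l : Fin n, ∑ k, P x l j * pd l (fun y => N y k k) x := Finset.sum_comm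
    have e2 : (∑ k : Fin n, ∑ l, P x k l * pd l (fun y => N y j k) x)
        = ∑ l : Fin n, ∑ k, P x l k * pd k (fun y => N y j l) x := rfl
    have e3 : (∑ k : Fin n, ∑ l, N x l k * pd l (fun y => P y k j) x)
        = ∑ l : Fin n, ∑ k, N x l k * pd l (fun y => P y k j) x := Finset.sum_comm
    have e4 : (∑ k : Fin n, ∑ l, N x j l * pd k (fun y => P y k l) x)
        = ∑ l : Fin n, ∑ k, N x j l * pd k (fun y => P y k l) x := Finset.sum_comm
    have e5 : (∑ k : Fin n, ∑ l, P x l j * pd k (fun y => N y k l) x)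
        = ∑ l : Fin n, ∑ k, P x l j * pd k (fun y => N y k l) x := Finset.sum_comm
    have f1 : (∑ k : Fin n, ∑ l, pd k (fun y => N y j l) x * P x l k)
        = ∑ l : Fin n, ∑ k, P x l k * pd k (fun y => N y j l) x := by
      rw [Finset.sum_comm]
      exact Finset.sum_congr rfl fun l _ => Finset.sum_congr rfl fun k _ => mul_comm _ _
    have f2 : (∑ k : Fin n, ∑ l, N x j l * pd k (fun y => P y l k) x)
        = -∑ l : Fin n, ∑ k, N x j l * pd k (fun y => P y k l) x := by
      rw [← e4, ← Finset.sum_neg_distrib]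
      refine Finset.sum_congr rfl fun k _ => ?_
      rw [← Finset.sum_neg_distrib]
      refine Finset.sum_congr rfl fun l _ => ?_
      rw [hpdPsk k l k x]
      ring
    have f3 : (∑ k : Fin n, ∑ l, pd k (fun y => N y k l) x * P x l j)
        = ∑ l : Fin n, ∑ k, P x l j * pd k (fun y => N y k l) x := by
      rw [Finset.sum_comm]
      exact Finset.sum_congr rfl fun l _ => Finset.sum_congr rfl fun k _ => mul_comm _ _
    have f4 : (∑ k : Fin n, ∑ l, N x k l * pd k (fun y => P y l j) x)
        = ∑ l : Fin n, ∑ k, N x l k * pd l (fun y => P y k j) x := rfl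
    -- trace rewriting
    have g1 : (∑ l : Fin n, P x l j * pd l (fun y => ∑ m, N y m m) x)
        = ∑ l : Fin n, ∑ k, P x l j * pd l (fun y => N y k k) x := by
      refine Finset.sum_congr rfl fun l _ => ?_
      rw [pd_sum (n := n) Finset.univ (fun m => fun y => N y m m) l x
        (fun m _ => hNd m m x), Finset.mul_sum]
    rw [g1]
    rw [e1, e2, e3, e4, e5] at hI
    rw [f1, f2, f3, f4] at hII
    linarith
  -- expand the left-hand side
  have hexp : ∀ l k : Fin n, pd k (fun y => ∑ j, N y j l * pd j f y) x
      = ∑ j, (pd k (fun y => N y j l) x * pd j f x + N x j l * pd k (pd j f) x) := by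
    intro l k
    rw [pd_sum (n := n) Finset.univ (fun j => fun y => N y j l * pd j f y) k x
      (fun j _ => (hNd j l x).mul (hfd j x))]
    exact Finset.sum_congr rfl fun j _ =>
      pd_mul (fun y => N y j l) (pd j f) k x (hNd j l x) (hfd j x)
  -- Hessian contraction vanishes
  have hM : ∀ a b : Fin n, (∑ l, N x a l * P x l b) = -∑ l, N x b l * P x l a := by
    intro a b
    have h1 := hNPsk x a b
    rw [Finset.sum_add_distrib] at h1
    linarith
  have hHess : (∑ k : Fin n, ∑ j, (∑ l, N x j l * P x l k) * pd k (pd j f) x) = 0 := by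
    have hself : (∑ k : Fin n, ∑ j, (∑ l, N x j l * P x l k) * pd k (pd j f) x)
        = -(∑ k : Fin n, ∑ j, (∑ l, N x j l * P x l k) * pd k (pd j f) x) := by
      calc (∑ k : Fin n, ∑ j, (∑ l, N x j l * P x l k) * pd k (pd j f) x)
          = ∑ k : Fin n, ∑ j, -((∑ l, N x k l * P x l j) * pd j (pd k f) x) := by
            refine Finset.sum_congr rfl fun k _ => Finset.sum_congr rfl fun j _ => ?_
            rw [hM j k, pd_swap f hf k j x]
            ring
        _ = -(∑ k : Fin n, ∑ j, (∑ l, N x k l * P x l j) * pd j (pd k f) x) := by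
            rw [← Finset.sum_neg_distrib]
            exact Finset.sum_congr rfl fun k _ => Finset.sum_neg_distrib _
        _ = -(∑ k : Fin n, ∑ j, (∑ l, N x j l * P x l k) * pd k (pd j f) x) := by
            rw [Finset.sum_comm (f := fun k j => (∑ l, N x k l * P x l j) * pd j (pd k f) x)]
    linarith
  -- assemble
  calc ∑ l : Fin n, ∑ k, P x l k * pd k (fun y => ∑ j, N y j l * pd j f y) x
      = ∑ l : Fin n, ∑ k, ∑ j,
          (P x l k * (pd k (fun y => N y j l) x * pd j f x)
            + P x l k * (N x j l * pd k (pd j f) x)) := by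
        refine Finset.sum_congr rfl fun l _ => Finset.sum_congr rfl fun k _ => ?_
        rw [hexp l k, Finset.mul_sum]
        exact Finset.sum_congr rfl fun j _ => by ring
    _ = (∑ l : Fin n, ∑ k, ∑ j, P x l k * (pd k (fun y => N y j l) x * pd j f x))
          + ∑ l : Fin n, ∑ k, ∑ j, P x l k * (N x j l * pd k (pd j f) x) := by
        simp [Finset.sum_add_distrib]
    _ = (∑ l : Fin n, ∑ k, ∑ j, P x l k * (pd k (fun y => N y j l) x * pd j f x))
          + ∑ k : Fin n, ∑ j, (∑ l, N x j l * P x l k) * pd k (pd j f) x := by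
        congr 1
        rw [Finset.sum_comm (f := fun l k => ∑ j, P x l k * (N x j l * pd k (pd j f) x))]
        refine Finset.sum_congr rfl fun k _ => ?_
        rw [Finset.sum_comm (f := fun l j => P x l k * (N x j l * pd k (pd j f) x))]
        refine Finset.sum_congr rfl fun j _ => ?_
        rw [Finset.sum_mul]
        exact Finset.sum_congr rfl fun l _ => by ring
    _ = ∑ l : Fin n, ∑ k, ∑ j, P x l k * (pd k (fun y => N y j l) x * pd j f x) := by
        rw [hHess, add_zero]
    _ = ∑ j : Fin n, (∑ l, ∑ k, P x l k * pd k (fun y => N y j l) x) * pd j f x := by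
        rw [show (∑ l : Fin n, ∑ k, ∑ j, P x l k * (pd k (fun y => N y j l) x * pd j f x))
            = ∑ l : Fin n, ∑ j, ∑ k, P x l k * (pd k (fun y => N y j l) x * pd j f x) from
          Finset.sum_congr rfl fun l _ => Finset.sum_comm]
        rw [Finset.sum_comm (f := fun l j => ∑ k, P x l k * (pd k (fun y => N y j l) x * pd j f x))]
        refine Finset.sum_congr rfl fun j _ => ?_
        rw [Finset.sum_mul]
        refine Finset.sum_congr rfl fun l _ => ?_
        rw [Finset.sum_mul]
        exact Finset.sum_congr rfl fun k _ => by ring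
    _ = ∑ j : Fin n, (-(1/2 : ℝ) * ∑ l, P x l j * pd l (fun y => ∑ m, N y m m) x) * pd j f x := by
        exact Finset.sum_congr rfl fun j _ => by rw [key j]
    _ = -(1 / 2 : ℝ) * ∑ l : Fin n, ∑ j, P x l j * pd l (fun y => ∑ m, N y m m) x * pd j f x := by
        rw [Finset.sum_comm (f := fun l j => P x l j * pd l (fun y => ∑ m, N y m m) x * pd j f x),
          Finset.mul_sum]
        refine Finset.sum_congr rfl fun j _ => ?_
        rw [← Finset.sum_mul]
        ring
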